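/- Suppose −1 is a nonsquare in F_q. Then S_{00}^{00} = S_{00}^{11} = ∅. Moreover, for (x,y) ∈ S: (x,y) ∈ S_{01}^{10} if and only if (x,y) ∈ S_{10}^{01}, if and only if (1−y)(x−y) and (1−x)(y−x) are squares; and (x,y) ∈ S_{01}^{00} if and only if (x−1)(y−x) and (x² − 2x + y)(y−x) are squares. -/

import Mathlib

open scoped Classical

noncomputable section

/-- The operation of the quasigroup `Q_{a,b}`:
`u*v = u + a(v-u)` if `v-u` is a square, `u*v = u + b(v-u)` otherwise. -/
def qop {F : Type*} [Field F] (a b u v : F) : F :=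
  if IsSquare (v - u) then u + a * (v - u) else u + b * (v - u)

/-- The set `Σ(F)` of pairs `(a,b)` with `a ≠ b`, `a,b ∉ {0,1}`, and
`ab` and `(1-a)(1-b)` both squares. -/
def SigSet (F : Type*) [Field F] : Set (F × F) :=
  {p | p.1 ≠ p.2 ∧ p.1 ≠ 0 ∧ p.1 ≠ 1 ∧ p.2 ≠ 0 ∧ p.2 ≠ 1 ∧
    IsSquare (p.1 * p.2) ∧ IsSquare ((1 - p.1) * (1 - p.2))}

/-- `Q_{a,b}` is maximally nonassociative. -/
def MaxNA {F : Type*} [Field F] (a b : F) : Prop :=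
  ∀ u v w : F, qop a b (qop a b u v) w = qop a b u (qop a b v w) → u = v ∧ v = w

/-- `σ(q)`: the number of pairs `(a,b) ∈ Σ` for which `Q_{a,b}` is
maximally nonassociative. -/
def sigmaCount (F : Type*) [Field F] : ℕ :=
  Set.ncard {p : F × F | p ∈ SigSet F ∧ MaxNA p.1 p.2}

/-- The quadratic orthomorphism `ψ_{a,b}`. -/
def psiOrtho {F : Type*} [Field F] (a b u : F) : F :=
  if IsSquare u then a * u else b * u

/-- The Associativity Equation `ψ(ψ(u)-v) = ψ(-v) + ψ(u-v-ψ(-v))`. -/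
def AssocEq {F : Type*} [Field F] (a b u v : F) : Prop :=
  psiOrtho a b (psiOrtho a b u - v) =
    psiOrtho a b (-v) + psiOrtho a b (u - v - psiOrtho a b (-v))

/-- The set `S(F)` of pairs `(x,y)` of squares with `x ≠ y`, `x,y ∉ {0,1}`. -/
def SPairs (F : Type*) [Field F] : Set (F × F) :=
  {p | IsSquare p.1 ∧ IsSquare p.2 ∧ p.1 ≠ p.2 ∧ p.1 ≠ 0 ∧ p.1 ≠ 1 ∧ p.2 ≠ 0 ∧ p.2 ≠ 1}

/-- The map `Ψ : Σ → S`, `(a,b) ↦ (a/b, (1-a)/(1-b))`. -/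
def PsiMap {F : Type*} [Field F] (p : F × F) : F × F :=
  (p.1 / p.2, (1 - p.1) / (1 - p.2))

/-- The set `E(a,b)` of nonzero solutions of the Associativity Equation. -/
def ESet {F : Type*} [Field F] (a b : F) : Set (F × F) :=
  {p | p ≠ (0, 0) ∧ AssocEq a b p.1 p.2}

/-- The set `E_{ij}^{rs}(a,b)`. -/
def ESub {F : Type*} [Field F] (a b : F) (i j r s : Fin 2) : Set (F × F) :=
  {p | p ∈ ESet a b ∧ (IsSquare p.1 ↔ i = 0) ∧ (IsSquare (-p.2) ↔ j = 0) ∧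
    (IsSquare (psiOrtho a b p.1 - p.2) ↔ r = 0) ∧
    (IsSquare (p.1 - p.2 - psiOrtho a b (-p.2)) ↔ s = 0)}

/-- The set `Σ_{ij}^{rs} = {(a,b) ∈ Σ : E_{ij}^{rs}(a,b) ≠ ∅}`. -/
def SigSub (F : Type*) [Field F] (i j r s : Fin 2) : Set (F × F) :=
  {p | p ∈ SigSet F ∧ (ESub p.1 p.2 i j r s).Nonempty}

/-- The set `S_{ij}^{rs} = Ψ(Σ_{ij}^{rs})`. -/
def SSub (F : Type*) [Field F] (i j r s : Fin 2) : Set (F × F) :=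
  PsiMap '' (SigSub F i j r s)

/-! Fixing the square classes of `u`, `-v`, `ψ(u) - v` and `u - v - ψ(-v)` makes every `ψ` in the
Associativity Equation a multiplication by `a` or `b`, so the equation becomes linear in `(u, v)`.
In the cases at hand it forces `u = v` or `a u = b v`, and the remaining conditions collapse to
square-class conditions on `a`, `b`, `a - 1`, `b - 1` and `a (ab + b - a)`, using that `z` and `-z`
lie in opposite classes because `-1` is a nonsquare. Inverting `Ψ` explicitly by
`b = (y - 1) / (y - x)`, `a = x b` turns these into the stated conditions on `(x, y)`. -/

section SquareClasses

theorem isSquare_mul_iff_of_isSquare {α : Type*} [CommGroupWithZero α] {u : α} (hu : IsSquare u)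
    (hu0 : u ≠ 0) (z : α) : IsSquare (z * u) ↔ IsSquare z := by
  obtain ⟨w, rfl⟩ := hu
  have hw : w ≠ 0 := by rintro rfl; simp at hu0
  refine ⟨fun ⟨d, hd⟩ => ⟨d / w, ?_⟩, fun h => h.mul ⟨w, rfl⟩⟩
  rw [div_mul_div_comm, ← hd, mul_div_cancel_right₀ _ (mul_ne_zero hw hw)]

theorem isSquare_div_iff_isSquare_mul {α : Type*} [CommGroupWithZero α] {w : α} (hw : w ≠ 0)
    (z : α) : IsSquare (z / w) ↔ IsSquare (z * w) := by
  rw [← isSquare_mul_iff_of_isSquare (IsSquare.mul_self w) (mul_ne_zero hw hw),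
    div_mul_eq_mul_div, mul_div_assoc, mul_div_cancel_right₀ w hw]

variable {F : Type*} [Field F] [Fintype F]

theorem isSquare_mul_iff_of_ne_zero {a b : F} (ha : a ≠ 0) (hb : b ≠ 0) :
    IsSquare (a * b) ↔ (IsSquare a ↔ IsSquare b) := by
  rw [← quadraticChar_one_iff_isSquare ha, ← quadraticChar_one_iff_isSquare hb,
    ← quadraticChar_one_iff_isSquare (mul_ne_zero ha hb), map_mul]
  rcases quadraticChar_dichotomy ha with h | h <;>
    rcases quadraticChar_dichotomy hb with h' | h' <;> rw [h, h'] <;> norm_num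

theorem isSquare_neg_iff_of_not_isSquare_neg_one (hns : ¬ IsSquare (-1 : F)) {z : F}
    (hz : z ≠ 0) : IsSquare (-z) ↔ ¬ IsSquare z := by
  rw [← neg_one_mul, isSquare_mul_iff_of_ne_zero (neg_ne_zero.mpr one_ne_zero) hz]
  tauto

theorem isSquare_fst_iff_of_mem_sigSet {q : F × F} (hq : q ∈ SigSet F) :
    IsSquare q.1 ↔ IsSquare q.2 :=
  (isSquare_mul_iff_of_ne_zero hq.2.1 hq.2.2.2.1).1 hq.2.2.2.2.2.1

theorem isSquare_fst_sub_one_iff_of_mem_sigSet {q : F × F} (hq : q ∈ SigSet F) :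
    IsSquare (q.1 - 1) ↔ IsSquare (q.2 - 1) := by
  obtain ⟨-, -, ha1, -, hb1, -, h1ab⟩ := hq
  rw [← isSquare_mul_iff_of_ne_zero (sub_ne_zero.2 ha1) (sub_ne_zero.2 hb1)]
  exact (show (1 - q.1) * (1 - q.2) = (q.1 - 1) * (q.2 - 1) by ring) ▸ h1ab

end SquareClasses

section Orthomorphism

variable {F : Type*} [Field F]

theorem psiOrtho_eq_of_isSquare_iff {a b u : F} {i : Fin 2} (h : IsSquare u ↔ i = 0) :
    psiOrtho a b u = ![a, b] i * u := by
  fin_cases i <;> simp_all [psiOrtho]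

theorem mem_ESub_iff {a b u v : F} {i j r s : Fin 2} :
    (u, v) ∈ ESub a b i j r s ↔
      (u, v) ≠ (0, 0) ∧ (IsSquare u ↔ i = 0) ∧ (IsSquare (-v) ↔ j = 0) ∧
      (IsSquare (![a, b] i * u - v) ↔ r = 0) ∧ (IsSquare (u - v + ![a, b] j * v) ↔ s = 0) ∧
      ![a, b] r * (![a, b] i * u - v) =
        -(![a, b] j * v) + ![a, b] s * (u - v + ![a, b] j * v) := by
  simp only [ESub, ESet, AssocEq, Set.mem_ofPred_eq]
  constructor
  · rintro ⟨⟨hne, heq⟩, hi, hj, hr, hs⟩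
    simp only [psiOrtho_eq_of_isSquare_iff hi, psiOrtho_eq_of_isSquare_iff hj, mul_neg,
      sub_neg_eq_add] at hr hs heq
    rw [psiOrtho_eq_of_isSquare_iff hr, psiOrtho_eq_of_isSquare_iff hs] at heq
    exact ⟨hne, hi, hj, hr, hs, heq⟩
  · rintro ⟨hne, hi, hj, hr, hs, heq⟩
    simp only [psiOrtho_eq_of_isSquare_iff hi, psiOrtho_eq_of_isSquare_iff hj, mul_neg,
      sub_neg_eq_add, psiOrtho_eq_of_isSquare_iff hr, psiOrtho_eq_of_isSquare_iff hs]
    exact ⟨⟨hne, heq⟩, hi, hj, hr, hs⟩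

end Orthomorphism

section AssociativityEquation

variable {F : Type*} [Field F] {a b : F}

theorem eSub_0000_eq_empty [Fintype F] (hns : ¬ IsSquare (-1 : F)) (ha0 : a ≠ 0)
    (ha1 : a ≠ 1) :
    ESub a b 0 0 0 0 = ∅ := by
  refine Set.eq_empty_of_forall_notMem fun ⟨u, v⟩ h => ?_
  simp only [mem_ESub_iff, Matrix.cons_val_zero, iff_true] at h
  obtain ⟨hne, hu, hv, -, -, heq⟩ := h
  obtain rfl : u = v :=
    mul_left_cancel₀ (mul_ne_zero ha0 (sub_ne_zero.2 ha1)) (by linear_combination heq)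
  have hu0 : u ≠ 0 := by rintro rfl; exact hne rfl
  exact (isSquare_neg_iff_of_not_isSquare_neg_one hns hu0).1 hv hu

theorem eSub_0011_eq_empty [Fintype F] (hns : ¬ IsSquare (-1 : F)) (hσ : (a, b) ∈ SigSet F) :
    ESub a b 0 0 1 1 = ∅ := by
  simp only [SigSet, Set.mem_ofPred_eq] at hσ
  obtain ⟨-, ha0, ha1, hb0, hb1, hab, h1ab⟩ := hσ
  refine Set.eq_empty_of_forall_notMem fun ⟨u, v⟩ h => ?_
  simp only [mem_ESub_iff, Matrix.cons_val_zero, Matrix.cons_val_one, Matrix.cons_val_fin_one,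
    iff_true, iff_false, one_ne_zero] at h
  obtain ⟨hne, hu, hv, -, -, heq⟩ := h
  have hrel : b * (a - 1) * u = a * (b - 1) * v := by linear_combination heq
  have hv0 : v ≠ 0 := by
    rintro rfl
    obtain rfl : u = 0 := by simpa [hb0, sub_eq_zero, ha1] using hrel
    exact hne rfl
  refine (isSquare_neg_iff_of_not_isSquare_neg_one hns hv0).1 hv ?_
  rw [← isSquare_mul_iff_of_isSquare ⟨a * (b - 1), sq _⟩
    (pow_ne_zero 2 (mul_ne_zero ha0 (sub_ne_zero.2 hb1)))]
  have key : v * (a * (b - 1)) ^ 2 = a * b * ((1 - a) * (1 - b)) * u := by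
    linear_combination (-(a * (b - 1))) * hrel
  exact key ▸ (hab.mul h1ab).mul hu

theorem eSub_0110_nonempty_iff (hns : ¬ IsSquare (-1 : F)) (ha0 : a ≠ 0) (hb1 : b ≠ 1) :
    (ESub a b 0 1 1 0).Nonempty ↔ ¬ IsSquare (a - 1) ∧ IsSquare b := by
  simp only [Set.Nonempty, Prod.exists, mem_ESub_iff, Matrix.cons_val_zero, Matrix.cons_val_one,
    Matrix.cons_val_fin_one, iff_true, iff_false, one_ne_zero]
  constructor
  · rintro ⟨u, v, hne, hu, -, hr, hs, heq⟩
    obtain rfl : u = v :=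
      mul_left_cancel₀ (mul_ne_zero ha0 (sub_ne_zero.2 hb1)) (by linear_combination heq)
    have hu0 : u ≠ 0 := by rintro rfl; exact hne rfl
    rw [show a * u - u = (a - 1) * u by ring, isSquare_mul_iff_of_isSquare hu hu0] at hr
    rw [show u - u + b * u = b * u by ring, isSquare_mul_iff_of_isSquare hu hu0] at hs
    exact ⟨hr, hs⟩
  · rintro ⟨ha1, hb⟩
    exact ⟨1, 1, by simp, IsSquare.one, by simpa using hns, by simpa using ha1,
      by simpa using hb, by ring⟩

theorem eSub_1001_nonempty_iff [Fintype F] (hns : ¬ IsSquare (-1 : F)) (ha0 : a ≠ 0)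
    (ha1 : a ≠ 1) (hb0 : b ≠ 0) (hb1 : b ≠ 1) :
    (ESub a b 1 0 0 1).Nonempty ↔ ¬ IsSquare (b - 1) ∧ IsSquare a := by
  simp only [Set.Nonempty, Prod.exists, mem_ESub_iff, Matrix.cons_val_zero, Matrix.cons_val_one,
    Matrix.cons_val_fin_one, iff_true, iff_false, one_ne_zero]
  constructor
  · rintro ⟨u, v, hne, -, hv, hr, hs, heq⟩
    obtain rfl : u = v :=
      mul_left_cancel₀ (mul_ne_zero hb0 (sub_ne_zero.2 ha1)) (by linear_combination heq)
    have hnu0 : -u ≠ 0 := by rintro h; exact hne (by rw [neg_eq_zero.1 h])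
    rw [show b * u - u = -(b - 1) * -u by ring, isSquare_mul_iff_of_isSquare hv hnu0,
      isSquare_neg_iff_of_not_isSquare_neg_one hns (sub_ne_zero.2 hb1)] at hr
    rw [show u - u + a * u = -a * -u by ring, isSquare_mul_iff_of_isSquare hv hnu0,
      isSquare_neg_iff_of_not_isSquare_neg_one hns ha0, not_not] at hs
    exact ⟨hr, hs⟩
  · rintro ⟨hnb1, ha⟩
    refine ⟨-1, -1, by simp, hns, by simp, ?_, ?_, by ring⟩
    · rwa [show b * -1 - -1 = -(b - 1) by ring,
        isSquare_neg_iff_of_not_isSquare_neg_one hns (sub_ne_zero.2 hb1)]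
    · rwa [show -1 - -1 + a * -1 = -a by ring, isSquare_neg_iff_of_not_isSquare_neg_one hns ha0,
        not_not]

theorem eSub_0100_nonempty_iff [Fintype F] (hns : ¬ IsSquare (-1 : F)) (ha0 : a ≠ 0)
    (ha1 : a ≠ 1) (hab : IsSquare (a * b)) :
    (ESub a b 0 1 0 0).Nonempty ↔ IsSquare (b - 1) ∧ IsSquare (a * (a * b + b - a)) := by
  simp only [Set.Nonempty, Prod.exists, mem_ESub_iff, Matrix.cons_val_zero, Matrix.cons_val_one,
    Matrix.cons_val_fin_one, iff_true, iff_false, one_ne_zero]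
  constructor
  · rintro ⟨u, v, -, -, hv, hr, hs, heq⟩
    have hrel : a * u = b * v :=
      mul_left_cancel₀ (sub_ne_zero.2 ha1) (by linear_combination heq)
    have hv0 : v ≠ 0 := by rintro rfl; exact hv (by simp)
    have hvsq : IsSquare v := by
      simpa using (isSquare_neg_iff_of_not_isSquare_neg_one hns hv0).not.1 hv
    rw [show a * u - v = (b - 1) * v by linear_combination hrel,
      isSquare_mul_iff_of_isSquare hvsq hv0] at hr
    rw [← isSquare_mul_iff_of_isSquare ⟨a, sq a⟩ (pow_ne_zero 2 ha0),
      show (u - v + b * v) * a ^ 2 = a * (a * b + b - a) * v by linear_combination a * hrel,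
      isSquare_mul_iff_of_isSquare hvsq hv0] at hs
    exact ⟨hr, hs⟩
  · rintro ⟨hb1, hcond⟩
    -- every solution has `a u = b v` with `u`, `v` squares; take `u = ab`, `v = a²`
    refine ⟨a * b, a ^ 2, by simp [ha0], hab, ?_, ?_, ?_, by ring⟩
    · rw [isSquare_neg_iff_of_not_isSquare_neg_one hns (pow_ne_zero 2 ha0), not_not]
      exact ⟨a, sq a⟩
    · rw [show a * (a * b) - a ^ 2 = (b - 1) * a ^ 2 by ring]
      exact hb1.mul ⟨a, sq a⟩
    · rwa [show a * b - a ^ 2 + b * a ^ 2 = a * (a * b + b - a) by ring]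

end AssociativityEquation

section InverseOfPsiMap

variable {F : Type*} [Field F]

-- `Ψ(a, b) = (x, y)` means `a = x b` and `1 - a = y (1 - b)`
def psiMapInv (p : F × F) : F × F :=
  (p.1 * ((p.2 - 1) / (p.2 - p.1)), (p.2 - 1) / (p.2 - p.1))

theorem psiMapInv_psiMap {q : F × F} (hq : q ∈ SigSet F) : psiMapInv (PsiMap q) = q := by
  obtain ⟨a, b⟩ := q
  obtain ⟨hab, -, -, hb0, hb1, -, -⟩ := hq
  have h1b : 1 - b ≠ 0 := sub_ne_zero.2 (Ne.symm hb1)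
  have hyx : (1 - a) / (1 - b) - a / b = (b - a) / (b * (1 - b)) := by field_simp; ring
  have hb : ((1 - a) / (1 - b) - 1) / ((1 - a) / (1 - b) - a / b) = b := by
    rw [hyx, div_eq_iff (div_ne_zero (sub_ne_zero.2 (Ne.symm hab)) (mul_ne_zero hb0 h1b))]
    field_simp
    ring
  simp only [psiMapInv, PsiMap, hb, div_mul_cancel₀ a hb0]

theorem psiMap_psiMapInv {p : F × F} (hp : p ∈ SPairs F) : PsiMap (psiMapInv p) = p := by
  obtain ⟨x, y⟩ := p
  obtain ⟨-, -, hxy, -, hx1, hy0, hy1⟩ := hp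
  have hyx : y - x ≠ 0 := sub_ne_zero.2 (Ne.symm hxy)
  have hb0 : (y - 1) / (y - x) ≠ 0 := div_ne_zero (sub_ne_zero.2 hy1) hyx
  have h1b : 1 - (y - 1) / (y - x) = (1 - x) / (y - x) := by field_simp; ring
  simp only [psiMapInv, PsiMap, mul_div_cancel_right₀ x hb0, h1b]
  congr 1
  rw [div_eq_iff (div_ne_zero (sub_ne_zero.2 (Ne.symm hx1)) hyx)]
  field_simp
  ring

theorem psiMapInv_mem_sigSet {p : F × F} (hp : p ∈ SPairs F) : psiMapInv p ∈ SigSet F := by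
  obtain ⟨x, y⟩ := p
  obtain ⟨hx, hy, hxy, hx0, hx1, hy0, hy1⟩ := hp
  set b := (y - 1) / (y - x)
  have hyx : y - x ≠ 0 := sub_ne_zero.2 (Ne.symm hxy)
  have hbyx : b * (y - x) = y - 1 := div_mul_cancel₀ _ hyx
  have hb0 : b ≠ 0 := div_ne_zero (sub_ne_zero.2 hy1) hyx
  have h1b : 1 - b = (1 - x) / (y - x) := by rw [eq_div_iff hyx]; linear_combination -hbyx
  have h1b0 : 1 - b ≠ 0 := h1b ▸ div_ne_zero (sub_ne_zero.2 (Ne.symm hx1)) hyx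
  have h1a : 1 - x * b = y * (1 - b) := by linear_combination hbyx
  refine ⟨fun h => hx1 (mul_right_cancel₀ hb0 (h.trans (one_mul b).symm)), mul_ne_zero hx0 hb0,
    fun h => mul_ne_zero hy0 h1b0 (h1a ▸ sub_eq_zero.2 h.symm), hb0,
    fun h => h1b0 (sub_eq_zero.2 h.symm), ?_, ?_⟩
  · show IsSquare (x * b * b)
    exact mul_assoc x b b ▸ hx.mul (IsSquare.mul_self b)
  · show IsSquare ((1 - x * b) * (1 - b))
    rw [h1a, show y * (1 - b) * (1 - b) = y * ((1 - b) * (1 - b)) by ring]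
    exact hy.mul (IsSquare.mul_self _)

end InverseOfPsiMap

section SSubMembership

variable {F : Type*} [Field F] {i j r s : Fin 2}

theorem sSub_eq_empty_of_eSub_eq_empty
    (h : ∀ a b : F, (a, b) ∈ SigSet F → ESub a b i j r s = ∅) : SSub F i j r s = ∅ :=
  Set.eq_empty_of_forall_notMem fun _ ⟨q, ⟨hq, hE⟩, _⟩ => hE.ne_empty (h q.1 q.2 hq)

theorem mem_sSub_iff {p : F × F} (hp : p ∈ SPairs F) :
    p ∈ SSub F i j r s ↔ (ESub (psiMapInv p).1 (psiMapInv p).2 i j r s).Nonempty := by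
  constructor
  · rintro ⟨q, ⟨hq, hE⟩, rfl⟩
    rwa [psiMapInv_psiMap hq]
  · exact fun hE => ⟨psiMapInv p, ⟨psiMapInv_mem_sigSet hp, hE⟩, psiMap_psiMapInv hp⟩

theorem isSquare_psiMapInv_snd_iff {x y : F} (hxy : x ≠ y) :
    IsSquare (psiMapInv (x, y)).2 ↔ IsSquare ((1 - y) * (x - y)) := by
  simp only [psiMapInv]
  rw [isSquare_div_iff_isSquare_mul (sub_ne_zero.2 (Ne.symm hxy)),
    show (y - 1) * (y - x) = (1 - y) * (x - y) by ring]

theorem isSquare_psiMapInv_snd_sub_one_iff {x y : F} (hxy : x ≠ y) :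
    IsSquare ((psiMapInv (x, y)).2 - 1) ↔ IsSquare ((x - 1) * (y - x)) := by
  have hyx : y - x ≠ 0 := sub_ne_zero.2 (Ne.symm hxy)
  simp only [psiMapInv]
  rw [← isSquare_div_iff_isSquare_mul hyx, div_sub_one hyx, show y - 1 - (y - x) = x - 1 by ring]

theorem isSquare_psiMapInv_fst_mul_iff {x y : F} (hx : IsSquare x) (hx0 : x ≠ 0) (hy1 : y ≠ 1)
    (hxy : x ≠ y) :
    IsSquare ((psiMapInv (x, y)).1 * ((psiMapInv (x, y)).1 * (psiMapInv (x, y)).2 +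
        (psiMapInv (x, y)).2 - (psiMapInv (x, y)).1)) ↔
      IsSquare ((x ^ 2 - 2 * x + y) * (y - x)) := by
  have hyx : y - x ≠ 0 := sub_ne_zero.2 (Ne.symm hxy)
  simp only [psiMapInv]
  set b := (y - 1) / (y - x)
  have hbyx : b * (y - x) = y - 1 := div_mul_cancel₀ _ hyx
  have hb0 : b ≠ 0 := div_ne_zero (sub_ne_zero.2 hy1) hyx
  rw [show x * b * (x * b * b + b - x * b) = (x ^ 2 - 2 * x + y) / (y - x) * (x * b ^ 2) by
      rw [div_mul_eq_mul_div, eq_div_iff hyx]; linear_combination x ^ 2 * b ^ 2 * hbyx,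
    isSquare_mul_iff_of_isSquare (hx.mul (IsSquare.sq b)) (mul_ne_zero hx0 (pow_ne_zero 2 hb0)),
    isSquare_div_iff_isSquare_mul hyx]

end SSubMembership

theorem ssub_neg_one_nonsquare_general (F : Type*) [Field F] [Fintype F]
    (hns : ¬ IsSquare (-1 : F)) :
    SSub F 0 0 0 0 = ∅ ∧ SSub F 0 0 1 1 = ∅ ∧
    ∀ x y : F, (x, y) ∈ SPairs F →
      (((x, y) ∈ SSub F 0 1 1 0 ↔ (x, y) ∈ SSub F 1 0 0 1) ∧
       ((x, y) ∈ SSub F 0 1 1 0 ↔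
          IsSquare ((1 - y) * (x - y)) ∧ IsSquare ((1 - x) * (y - x))) ∧
       ((x, y) ∈ SSub F 0 1 0 0 ↔
          IsSquare ((x - 1) * (y - x)) ∧
          IsSquare ((x ^ 2 - 2 * x + y) * (y - x)))) := by
  refine ⟨sSub_eq_empty_of_eSub_eq_empty fun a b hab => eSub_0000_eq_empty hns hab.2.1 hab.2.2.1,
    sSub_eq_empty_of_eSub_eq_empty fun a b hab => eSub_0011_eq_empty hns hab, fun x y hp => ?_⟩
  have hσ := psiMapInv_mem_sigSet hp
  have ⟨_, ha0, ha1, hb0, hb1, hab, _⟩ := hσ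
  simp only [mem_sSub_iff hp]
  obtain ⟨hx, -, hxy, hx0, hx1, -, hy1⟩ := hp
  have hneg : IsSquare ((1 - x) * (y - x)) ↔ ¬ IsSquare ((x - 1) * (y - x)) := by
    rw [show (1 - x) * (y - x) = -((x - 1) * (y - x)) by ring]
    exact isSquare_neg_iff_of_not_isSquare_neg_one hns
      (mul_ne_zero (sub_ne_zero.2 hx1) (sub_ne_zero.2 (Ne.symm hxy)))
  rw [eSub_0110_nonempty_iff hns ha0 hb1, eSub_1001_nonempty_iff hns ha0 ha1 hb0 hb1,
    eSub_0100_nonempty_iff hns ha0 ha1 hab, isSquare_fst_iff_of_mem_sigSet hσ,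
    isSquare_fst_sub_one_iff_of_mem_sigSet hσ, isSquare_psiMapInv_snd_iff hxy,
    isSquare_psiMapInv_snd_sub_one_iff hxy, isSquare_psiMapInv_fst_mul_iff hx hx0 hy1 hxy, hneg]
  exact ⟨Iff.rfl, and_comm, Iff.rfl⟩

/-- Lemma 2.5: if `-1` is a nonsquare then `S_{00}^{00} = S_{00}^{11} = ∅`, and
for `(x,y) ∈ S`: `(x,y) ∈ S_{01}^{10}` iff `(x,y) ∈ S_{10}^{01}` iff
`(1-y)(x-y)` and `(1-x)(y-x)` are squares, and `(x,y) ∈ S_{01}^{00}` iff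
`(x-1)(y-x)` and `(x²-2x+y)(y-x)` are squares. -/
theorem ssub_neg_one_nonsquare (F : Type*) [Field F] [Fintype F]
    (hodd : Odd (Fintype.card F)) (hns : ¬ IsSquare (-1 : F)) :
    SSub F 0 0 0 0 = ∅ ∧ SSub F 0 0 1 1 = ∅ ∧
    ∀ x y : F, (x, y) ∈ SPairs F →
      (((x, y) ∈ SSub F 0 1 1 0 ↔ (x, y) ∈ SSub F 1 0 0 1) ∧
       ((x, y) ∈ SSub F 0 1 1 0 ↔
          IsSquare ((1 - y) * (x - y)) ∧ IsSquare ((1 - x) * (y - x))) ∧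
       ((x, y) ∈ SSub F 0 1 0 0 ↔
          IsSquare ((x - 1) * (y - x)) ∧
          IsSquare ((x ^ 2 - 2 * x + y) * (y - x)))) :=
  ssub_neg_one_nonsquare_general F hns
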